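/- arXiv:2405.20769 — 5 statements merged into one kernel-verified Lean document; each statement's English description precedes it below -/
import Mathlib

section
/- Data-processing inequality for the hockey-stick divergence: for probability measures P and Q on a measurable space X, a Markov kernel κ from X to a measurable space Y, and every real α ≥ 0, the hockey-stick divergence satisfies H_α(κ∘P ‖ κ∘Q) ≤ H_α(P ‖ Q), where κ∘P denotes the composition of the kernel κ with the measure P (the law of κ(X) for X ∼ P). -/
open MeasureTheory ProbabilityTheory

/-- Hockey-stick divergence: `H_α(P ‖ Q) = sup_{E measurable} (P(E) − α·Q(E))`. -/
noncomputable def hsDiv {X : Type*} [MeasurableSpace X] (α : ℝ) (P Q : Measure X) : ℝ :=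
  ⨆ E : {E : Set X // MeasurableSet E}, ((P E).toReal - α * (Q E).toReal)

/-!
For `α ≥ 0` and `h ≥ 0`, `H_α(P ‖ Q) ≤ h` says exactly that `P S ≤ α Q S + h` for every
measurable `S`. For a measurable `f : X → [0, 1]` the layer cake formula
`∫ f dμ = ∫₀¹ μ {f > t} dt` then gives `∫ f dP ≤ α ∫ f dQ + h`. Taking `f x = κ x E` and
`h = H_α(P ‖ Q)` yields `(κ ∘ P) E ≤ α (κ ∘ Q) E + h` for every measurable `E`.
-/

open Set ENNReal

section

variable {X : Type*} [MeasurableSpace X] {α : ℝ} {P Q : Measure X}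

lemma hsDiv_bddAbove [IsFiniteMeasure P] (hα : 0 ≤ α) :
    BddAbove (range fun E : {E : Set X // MeasurableSet E} =>
      (P E).toReal - α * (Q E).toReal) := by
  refine ⟨(P univ).toReal, ?_⟩
  rintro _ ⟨E, rfl⟩
  have hP : (P E).toReal ≤ (P univ).toReal :=
    toReal_mono (measure_ne_top P univ) (measure_mono (subset_univ _))
  have hQ : 0 ≤ α * (Q E).toReal := by positivity
  linarith

lemma hsDiv_nonneg [IsFiniteMeasure P] (hα : 0 ≤ α) : 0 ≤ hsDiv α P Q := by
  simpa [hsDiv] using le_ciSup (hsDiv_bddAbove (Q := Q) hα) ⟨∅, .empty⟩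

lemma hsDiv_le_iff_forall_measure_le [IsFiniteMeasure P] [IsFiniteMeasure Q] (hα : 0 ≤ α)
    {h : ℝ} (hh : 0 ≤ h) :
    hsDiv α P Q ≤ h ↔
      ∀ E, MeasurableSet E → P E ≤ ENNReal.ofReal α * Q E + ENNReal.ofReal h := by
  have hrhs : ∀ E, ENNReal.ofReal α * Q E + ENNReal.ofReal h ≠ ∞ := fun E => by finiteness
  rw [hsDiv, ciSup_le_iff (hsDiv_bddAbove hα), Subtype.forall]
  refine forall₂_congr fun E _ => ?_
  rw [← toReal_le_toReal (measure_ne_top P E) (hrhs E), toReal_add (by finiteness) ofReal_ne_top,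
    toReal_mul, toReal_ofReal hα, toReal_ofReal hh, sub_le_iff_le_add']

lemma lintegral_ofReal_eq_setLIntegral_Ioc_meas_lt (μ : Measure X) {f : X → ℝ}
    (hf : Measurable f) (hf0 : ∀ x, 0 ≤ f x) (hf1 : ∀ x, f x ≤ 1) :
    ∫⁻ x, ENNReal.ofReal (f x) ∂μ = ∫⁻ t in Ioc 0 1, μ {x | t < f x} := by
  have hvanish : ∀ t ∈ Ioi (1 : ℝ), μ {x | t < f x} = 0 := fun t ht => by
    rw [show {x | t < f x} = ∅ from
      eq_empty_of_forall_notMem fun x hx => (hf1 x).not_gt (lt_trans ht hx), measure_empty]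
  rw [lintegral_eq_lintegral_meas_lt μ (ae_of_all _ hf0) hf.aemeasurable,
    ← Ioc_union_Ioi_eq_Ioi zero_le_one, lintegral_union measurableSet_Ioi Ioc_disjoint_Ioi_same,
    setLIntegral_congr_fun measurableSet_Ioi hvanish, lintegral_zero, add_zero]

lemma lintegral_le_mul_lintegral_add_of_measure_le {c d : ℝ≥0∞}
    (hPQ : ∀ S, MeasurableSet S → P S ≤ c * Q S + d) {f : X → ℝ}
    (hf : Measurable f) (hf0 : ∀ x, 0 ≤ f x) (hf1 : ∀ x, f x ≤ 1) :
    ∫⁻ x, ENNReal.ofReal (f x) ∂P ≤ c * (∫⁻ x, ENNReal.ofReal (f x) ∂Q) + d := by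
  have hQ : Measurable fun t : ℝ => Q {x | t < f x} :=
    Antitone.measurable fun s t hst => measure_mono fun x (hx : t < f x) => hst.trans_lt hx
  simp only [lintegral_ofReal_eq_setLIntegral_Ioc_meas_lt _ hf hf0 hf1]
  calc ∫⁻ t in Ioc 0 1, P {x | t < f x}
      ≤ ∫⁻ t in Ioc 0 1, (c * Q {x | t < f x} + d) :=
        lintegral_mono fun t => hPQ _ (measurableSet_lt measurable_const hf)
    _ = c * (∫⁻ t in Ioc 0 1, Q {x | t < f x}) + d := by
        rw [lintegral_add_right _ measurable_const, lintegral_const_mul _ hQ, setLIntegral_const,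
          Real.volume_Ioc, sub_zero, ofReal_one, mul_one]
end

/-- Data-processing inequality for the hockey-stick divergence: for probability measures
`P`, `Q` on `X`, a Markov kernel `κ : X → Y`, and any `α ≥ 0`,
`H_α(κ∘P ‖ κ∘Q) ≤ H_α(P ‖ Q)`. -/
theorem hsDiv_dataProcessing {X Y : Type*} [MeasurableSpace X] [MeasurableSpace Y]
    (P Q : Measure X) [IsProbabilityMeasure P] [IsProbabilityMeasure Q]
    (κ : Kernel X Y) [IsMarkovKernel κ] (α : ℝ) (hα : 0 ≤ α) :
    hsDiv α (P.bind κ) (Q.bind κ) ≤ hsDiv α P Q := by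
  have hPQ := (hsDiv_le_iff_forall_measure_le (P := P) (Q := Q) hα (hsDiv_nonneg hα)).1 le_rfl
  refine (hsDiv_le_iff_forall_measure_le hα (hsDiv_nonneg hα)).2 fun E hE => ?_
  have hκE : ∀ x, κ x E = ENNReal.ofReal ((κ x).real E) := fun x =>
    (ofReal_measureReal (measure_ne_top _ _)).symm
  simp only [Measure.bind_apply hE κ.aemeasurable, hκE]
  exact lintegral_le_mul_lintegral_add_of_measure_le hPQ (κ.measurable_coe hE).ennreal_toReal
    (fun _ => measureReal_nonneg) (fun _ => measureReal_le_one)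
end

section
/- Integral formulation of the hockey-stick divergence: let P and Q be probability measures on a measurable space with P absolutely continuous with respect to Q, and let α ≥ 0. Then sup over measurable sets E of (P(E) − α·Q(E)) equals ∫ max(dP/dQ(y) − α, 0) dQ(y), where dP/dQ is the Radon–Nikodym derivative; moreover the supremum is attained at the set E = {y : dP/dQ(y) > α}. -/
/-!
Since `P ≪ Q`, `P(E) − α·Q(E) = ∫_E (dP/dQ − α) dQ` for every `E`. Such a set integral
is at most the integral of the positive part `max (dP/dQ − α) 0`, with equality for the set where
the integrand is positive, i.e. `E = {dP/dQ > α}`; so the supremum is attained there and equals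
that integral.
-/

open MeasureTheory ProbabilityTheory

section PositivePart

variable {X : Type*} [MeasurableSpace X] {μ : Measure X} {g : X → ℝ}

lemma setIntegral_le_integral_max_zero (hg : Integrable g μ) (s : Set X) :
    ∫ x in s, g x ∂μ ≤ ∫ x, max (g x) 0 ∂μ :=
  calc ∫ x in s, g x ∂μ ≤ ∫ x in s, max (g x) 0 ∂μ :=
        integral_mono hg.restrict hg.pos_part.restrict fun _ ↦ le_max_left _ _
    _ ≤ ∫ x, max (g x) 0 ∂μ :=
        setIntegral_le_integral hg.pos_part (.of_forall fun _ ↦ le_max_right _ _)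

lemma setIntegral_pos_eq_integral_max_zero (hg : Measurable g) :
    ∫ x in {x | 0 < g x}, g x ∂μ = ∫ x, max (g x) 0 ∂μ := by
  rw [← integral_indicator (measurableSet_lt measurable_const hg)]
  congr 1 with x
  by_cases hx : 0 < g x
  · simp [hx, hx.le]
  · simp [hx, not_lt.mp hx]

end PositivePart

section HockeyStick

variable {X : Type*} [MeasurableSpace X] (P Q : Measure X)

lemma measureReal_sub_mul_eq_setIntegral_rnDeriv_sub [IsFiniteMeasure P] [IsFiniteMeasure Q]
    (hPQ : P ≪ Q) (α : ℝ) (E : Set X) :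
    P.real E - α * Q.real E = ∫ y in E, ((P.rnDeriv Q y).toReal - α) ∂Q := by
  rw [integral_sub Measure.integrable_toReal_rnDeriv.restrict (integrable_const α),
    Measure.setIntegral_toReal_rnDeriv hPQ, setIntegral_const, smul_eq_mul, mul_comm]

lemma hsDiv_eq_of_forall_le (α : ℝ) {E₀ : Set X} (hE₀ : MeasurableSet E₀)
    (hle : ∀ E, MeasurableSet E → P.real E - α * Q.real E ≤ P.real E₀ - α * Q.real E₀) :
    hsDiv α P Q = P.real E₀ - α * Q.real E₀ :=
  le_antisymm (ciSup_le fun E ↦ hle E.1 E.2)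
    (le_ciSup (f := fun E : {E : Set X // MeasurableSet E} ↦ P.real E.1 - α * Q.real E.1)
      ⟨_, Set.forall_mem_range.2 fun E ↦ hle E.1 E.2⟩ ⟨E₀, hE₀⟩)

end HockeyStick

theorem hsDiv_eq_integral_max_rnDeriv_general {X : Type*} [MeasurableSpace X]
    (P Q : Measure X) [IsProbabilityMeasure P] [IsProbabilityMeasure Q]
    (hPQ : P ≪ Q) (α : ℝ) :
    hsDiv α P Q = ∫ y, max ((P.rnDeriv Q y).toReal - α) 0 ∂Q ∧
    hsDiv α P Q = (P {y | α < (P.rnDeriv Q y).toReal}).toReal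
      - α * (Q {y | α < (P.rnDeriv Q y).toReal}).toReal := by
  set f : X → ℝ := fun y ↦ (P.rnDeriv Q y).toReal
  have hf : Measurable f := (P.measurable_rnDeriv Q).ennreal_toReal
  have hval := measureReal_sub_mul_eq_setIntegral_rnDeriv_sub P Q hPQ α
  have hattained : P.real {y | α < f y} - α * Q.real {y | α < f y} = ∫ y, max (f y - α) 0 ∂Q := by
    have h := setIntegral_pos_eq_integral_max_zero (μ := Q) (g := fun y ↦ f y - α)
      (hf.sub measurable_const)
    simp only [sub_pos] at h
    rw [hval]
    exact h
  have hsup : hsDiv α P Q = P.real {y | α < f y} - α * Q.real {y | α < f y} :=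
    hsDiv_eq_of_forall_le P Q α (measurableSet_lt measurable_const hf) fun E _ ↦ by
      rw [hval, hattained]
      exact setIntegral_le_integral_max_zero
        (Measure.integrable_toReal_rnDeriv.sub (integrable_const α)) E
  exact ⟨hsup.trans hattained, hsup⟩

/-- Integral formulation of the hockey-stick divergence: if `P ≪ Q` are probability measures
and `α ≥ 0`, then `H_α(P ‖ Q) = ∫ max(dP/dQ(y) − α, 0) dQ(y)`, and the defining supremum is
attained at the event `E = {y : dP/dQ(y) > α}`. -/
theorem hsDiv_eq_integral_max_rnDeriv {X : Type*} [MeasurableSpace X]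
    (P Q : Measure X) [IsProbabilityMeasure P] [IsProbabilityMeasure Q]
    (hPQ : P ≪ Q) (α : ℝ) (hα : 0 ≤ α) :
    hsDiv α P Q = ∫ y, max ((P.rnDeriv Q y).toReal - α) 0 ∂Q ∧
    hsDiv α P Q = (P {y | α < (P.rnDeriv Q y).toReal}).toReal
      - α * (Q {y | α < (P.rnDeriv Q y).toReal}).toReal :=
  hsDiv_eq_integral_max_rnDeriv_general P Q hPQ α
end

section
/- Composition preserves domination (two factors): let P₁', Q₁' be probability measures on a measurable space X₁, P₂', Q₂' probability measures on X₂, and P₁, Q₁, P₂, Q₂ probability measures on Y₁, Y₂ respectively. If H_α(P₁' ‖ Q₁') ≤ H_α(P₁ ‖ Q₁) for all α ≥ 0 and H_α(P₂' ‖ Q₂') ≤ H_α(P₂ ‖ Q₂) for all α ≥ 0, then for all α ≥ 0, H_α(P₁' ⊗ P₂' ‖ Q₁' ⊗ Q₂') ≤ H_α(P₁ ⊗ P₂ ‖ Q₁ ⊗ Q₂), where ⊗ denotes the product measure. -/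
/-!
Write `P = p • μ` and `Q = q • μ` for a dominating measure `μ` such as `P + Q`. Then
`H_α(P ‖ Q) = ∫ (p - α q)⁺ dμ`, the supremum being attained on `{p > α q}`. For product pairs
the densities multiply, and for a fixed first coordinate `x` the inner integral of
`(r(x) p(y) - α s(x) q(y))⁺` is `r(x) · H_{α s(x) / r(x)}(P ‖ Q)`. Hence replacing the second
factor by a dominating pair can only increase the divergence of the product; the first factor is
handled in the same way after swapping the coordinates.
-/

open MeasureTheory ProbabilityTheory

open Measure ENNReal

lemma ENNReal.toReal_add_ofReal_mul {i q : ℝ≥0∞} {α : ℝ} (hα : 0 ≤ α) (hi : i ≠ ∞) (hq : q ≠ ∞) :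
    (i + ENNReal.ofReal α * q).toReal = i.toReal + α * q.toReal := by
  rw [toReal_add hi (mul_ne_top ofReal_ne_top hq), toReal_mul, toReal_ofReal hα]

section WithDensity

variable {X : Type*} [MeasurableSpace X] {μ : Measure X} {f g : X → ℝ≥0∞}

lemma withDensity_apply_le_lintegral_tsub_add (hg : Measurable g) (a : ℝ≥0∞) {E : Set X}
    (hE : MeasurableSet E) :
    μ.withDensity f E ≤ ∫⁻ x, f x - a * g x ∂μ + a * μ.withDensity g E := by
  rw [withDensity_apply _ hE, withDensity_apply _ hE, ← lintegral_const_mul a hg]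
  calc ∫⁻ x in E, f x ∂μ ≤ ∫⁻ x in E, (f x - a * g x) + a * g x ∂μ :=
        lintegral_mono fun x => le_tsub_add
    _ = ∫⁻ x in E, f x - a * g x ∂μ + ∫⁻ x in E, a * g x ∂μ :=
        lintegral_add_right _ (hg.const_mul a)
    _ ≤ ∫⁻ x, f x - a * g x ∂μ + ∫⁻ x in E, a * g x ∂μ := by
        gcongr; exact restrict_le_self

lemma withDensity_apply_eq_lintegral_tsub_add (hf : Measurable f) (hg : Measurable g)
    (a : ℝ≥0∞) :
    μ.withDensity f {x | a * g x < f x}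
      = ∫⁻ x, f x - a * g x ∂μ + a * μ.withDensity g {x | a * g x < f x} := by
  have hE : MeasurableSet {x | a * g x < f x} := measurableSet_lt (hg.const_mul a) hf
  have hsupp : Function.support (fun x => f x - a * g x) ⊆ {x | a * g x < f x} := fun x hx =>
    tsub_pos_iff_lt.1 (pos_iff_ne_zero.2 hx)
  rw [withDensity_apply _ hE, withDensity_apply _ hE, ← lintegral_const_mul a hg,
    ← setLIntegral_eq_of_support_subset hsupp, ← lintegral_add_right _ (hg.const_mul a)]
  exact setLIntegral_congr_fun hE fun x hx => (tsub_add_cancel_of_le (le_of_lt hx)).symm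

theorem hsDiv_withDensity (hf : Measurable f) (hg : Measurable g)
    (hfi : ∫⁻ x, f x ∂μ ≠ ∞) (hgi : ∫⁻ x, g x ∂μ ≠ ∞) {α : ℝ} (hα : 0 ≤ α) :
    hsDiv α (μ.withDensity f) (μ.withDensity g)
      = (∫⁻ x, f x - ENNReal.ofReal α * g x ∂μ).toReal := by
  have : IsFiniteMeasure (μ.withDensity g) := isFiniteMeasure_withDensity hgi
  set I := ∫⁻ x, f x - ENNReal.ofReal α * g x ∂μ
  have hI : I ≠ ∞ := ne_top_of_le_ne_top hfi (lintegral_mono fun _ => tsub_le_self)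
  have hbound (E : {E : Set X // MeasurableSet E}) :
      (μ.withDensity f E).toReal - α * (μ.withDensity g E).toReal ≤ I.toReal := by
    have := toReal_mono (add_ne_top.2 ⟨hI, mul_ne_top ofReal_ne_top (measure_ne_top _ _)⟩)
      (withDensity_apply_le_lintegral_tsub_add hg _ E.2)
    rw [toReal_add_ofReal_mul hα hI (measure_ne_top _ _)] at this
    linarith
  -- the supremum is attained where the density of `μ.withDensity f` exceeds `α` times that of `g`
  refine le_antisymm (ciSup_le hbound) (le_ciSup_of_le ⟨_, Set.forall_mem_range.2 hbound⟩
    ⟨_, measurableSet_lt (hg.const_mul (ENNReal.ofReal α)) hf⟩ ?_)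
  rw [withDensity_apply_eq_lintegral_tsub_add hf hg,
    toReal_add_ofReal_mul hα hI (measure_ne_top _ _), add_sub_cancel_right]

end WithDensity

section RnDeriv

variable {X : Type*} [MeasurableSpace X] {μ : Measure X} [SigmaFinite μ]
  {P Q : Measure X} [IsFiniteMeasure P] [IsFiniteMeasure Q]

theorem hsDiv_eq_lintegral_rnDeriv (hP : P ≪ μ) (hQ : Q ≪ μ) {α : ℝ} (hα : 0 ≤ α) :
    hsDiv α P Q = (∫⁻ x, P.rnDeriv μ x - ENNReal.ofReal α * Q.rnDeriv μ x ∂μ).toReal := by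
  conv_lhs => rw [← withDensity_rnDeriv_eq P μ hP, ← withDensity_rnDeriv_eq Q μ hQ]
  exact hsDiv_withDensity (measurable_rnDeriv _ _) (measurable_rnDeriv _ _)
    (lintegral_rnDeriv_lt_top _ _).ne (lintegral_rnDeriv_lt_top _ _).ne hα

lemma lintegral_mul_rnDeriv_tsub_mul_rnDeriv (hP : P ≪ μ) (hQ : Q ≪ μ) {c d : ℝ≥0∞}
    (hc : c ≠ ∞) (hd : d ≠ ∞) :
    ∫⁻ x, c * P.rnDeriv μ x - d * Q.rnDeriv μ x ∂μ
      = c * ENNReal.ofReal (hsDiv (d / c).toReal P Q) := by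
  rcases eq_or_ne c 0 with rfl | hc0
  · simp
  have hdc : d / c ≠ ∞ := div_ne_top hd hc0
  rw [hsDiv_eq_lintegral_rnDeriv hP hQ toReal_nonneg, ofReal_toReal hdc,
    ofReal_toReal (ne_top_of_le_ne_top (lintegral_rnDeriv_lt_top P μ).ne
      (lintegral_mono fun _ => tsub_le_self)),
    ← lintegral_const_mul' _ _ hc]
  refine lintegral_congr fun x => ?_
  rw [ENNReal.mul_sub fun _ _ => hc, ← mul_assoc, ENNReal.mul_div_cancel hc0 hc]

end RnDeriv

section Prod

variable {X Y : Type*} [MeasurableSpace X] [MeasurableSpace Y]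
  {μ : Measure X} {ν : Measure Y} [SigmaFinite μ] [SigmaFinite ν]

lemma prod_eq_withDensity_rnDeriv {P : Measure X} {R : Measure Y} [SigmaFinite P] [SigmaFinite R]
    (hP : P ≪ μ) (hR : R ≪ ν) :
    P.prod R = (μ.prod ν).withDensity (fun z => P.rnDeriv μ z.1 * R.rnDeriv ν z.2) := by
  rw [← prod_withDensity (measurable_rnDeriv _ _) (measurable_rnDeriv _ _),
    withDensity_rnDeriv_eq _ _ hP, withDensity_rnDeriv_eq _ _ hR]

theorem hsDiv_prod_eq_lintegral_lintegral {R S : Measure X} {P Q : Measure Y}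
    [IsFiniteMeasure R] [IsFiniteMeasure S] [IsFiniteMeasure P] [IsFiniteMeasure Q]
    (hR : R ≪ μ) (hS : S ≪ μ) (hP : P ≪ ν) (hQ : Q ≪ ν) {α : ℝ} (hα : 0 ≤ α) :
    hsDiv α (R.prod P) (S.prod Q) = (∫⁻ x, ∫⁻ y, R.rnDeriv μ x * P.rnDeriv ν y
      - ENNReal.ofReal α * (S.rnDeriv μ x * Q.rnDeriv ν y) ∂ν ∂μ).toReal := by
  have hint {A : Measure X} {B : Measure Y} [IsFiniteMeasure A] [IsFiniteMeasure B] :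
      ∫⁻ z, A.rnDeriv μ z.1 * B.rnDeriv ν z.2 ∂(μ.prod ν) ≠ ∞ := by
    rw [lintegral_prod_mul (measurable_rnDeriv _ _).aemeasurable
      (measurable_rnDeriv _ _).aemeasurable]
    exact mul_ne_top (lintegral_rnDeriv_lt_top _ _).ne (lintegral_rnDeriv_lt_top _ _).ne
  have hmeas {A : Measure X} {B : Measure Y} :
      Measurable fun z : X × Y => A.rnDeriv μ z.1 * B.rnDeriv ν z.2 := by fun_prop
  rw [prod_eq_withDensity_rnDeriv hR hP, prod_eq_withDensity_rnDeriv hS hQ,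
    hsDiv_withDensity hmeas hmeas hint hint hα]
  exact congrArg ENNReal.toReal (lintegral_prod _ (hmeas.sub (hmeas.const_mul _)).aemeasurable)

end Prod

theorem hsDiv_map_measurableEquiv {X Y : Type*} [MeasurableSpace X] [MeasurableSpace Y]
    (e : X ≃ᵐ Y) (α : ℝ) (P Q : Measure X) :
    hsDiv α (P.map e) (Q.map e) = hsDiv α P Q := by
  refine Equiv.iSup_congr
    { toFun := fun E => ⟨e ⁻¹' E, e.measurable E.2⟩
      invFun := fun E => ⟨e.symm ⁻¹' E, e.symm.measurable E.2⟩
      left_inv := fun E => Subtype.ext (e.symm_preimage_preimage E)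
      right_inv := fun E => Subtype.ext (e.symm.symm_preimage_preimage E) } fun E => ?_
  simp only [e.map_apply]
  rfl

lemma hsDiv_prod_comm {X Y : Type*} [MeasurableSpace X] [MeasurableSpace Y]
    (α : ℝ) (R S : Measure X) (P Q : Measure Y) [SFinite R] [SFinite S] [SFinite P] [SFinite Q] :
    hsDiv α (P.prod R) (Q.prod S) = hsDiv α (R.prod P) (S.prod Q) := by
  rw [← prod_swap (μ := R), ← prod_swap (μ := S)]
  exact hsDiv_map_measurableEquiv MeasurableEquiv.prodComm α _ _

def HockeyStickDominates {X X' : Type*} [MeasurableSpace X] [MeasurableSpace X']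
    (P Q : Measure X) (P' Q' : Measure X') : Prop :=
  ∀ α : ℝ, 0 ≤ α → hsDiv α P' Q' ≤ hsDiv α P Q

namespace HockeyStickDominates

variable {X X' Z : Type*} [MeasurableSpace X] [MeasurableSpace X'] [MeasurableSpace Z]
  {P Q : Measure X} {P' Q' : Measure X'}
  [IsFiniteMeasure P] [IsFiniteMeasure Q] [IsFiniteMeasure P'] [IsFiniteMeasure Q']
  (R S : Measure Z) [IsFiniteMeasure R] [IsFiniteMeasure S]

theorem prod_left (h : HockeyStickDominates P Q P' Q') :
    HockeyStickDominates (R.prod P) (S.prod Q) (R.prod P') (S.prod Q') := by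
  intro α hα
  have hR : R ≪ R + S := AbsolutelyContinuous.rfl.add_right S
  have hS : S ≪ R + S := AbsolutelyContinuous.rfl.add_right' R
  have hP : P ≪ P + Q := AbsolutelyContinuous.rfl.add_right Q
  have hQ : Q ≪ P + Q := AbsolutelyContinuous.rfl.add_right' P
  have hP' : P' ≪ P' + Q' := AbsolutelyContinuous.rfl.add_right Q'
  have hQ' : Q' ≪ P' + Q' := AbsolutelyContinuous.rfl.add_right' P'
  rw [hsDiv_prod_eq_lintegral_lintegral hR hS hP' hQ' hα,
    hsDiv_prod_eq_lintegral_lintegral hR hS hP hQ hα]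
  have hfin : ∫⁻ x, ∫⁻ y, R.rnDeriv (R + S) x * P.rnDeriv (P + Q) y
      - ENNReal.ofReal α * (S.rnDeriv (R + S) x * Q.rnDeriv (P + Q) y) ∂(P + Q) ∂(R + S) ≠ ∞ :=
    ne_top_of_le_ne_top (by
      rw [lintegral_lintegral_mul (measurable_rnDeriv _ _).aemeasurable
        (measurable_rnDeriv _ _).aemeasurable]
      exact mul_ne_top (lintegral_rnDeriv_lt_top _ _).ne (lintegral_rnDeriv_lt_top _ _).ne)
      (lintegral_mono fun x => lintegral_mono fun y => tsub_le_self)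
  refine toReal_mono hfin (lintegral_mono_ae ?_)
  filter_upwards [rnDeriv_lt_top R (R + S), rnDeriv_lt_top S (R + S)] with x hRx hSx
  simp only [← mul_assoc]
  -- with `r`, `s` the densities of `R`, `S`, each inner integral is `r x` times the divergence
  -- of the second-factor pair at level `α s x / r x`
  rw [lintegral_mul_rnDeriv_tsub_mul_rnDeriv hP' hQ' hRx.ne (mul_ne_top ofReal_ne_top hSx.ne),
    lintegral_mul_rnDeriv_tsub_mul_rnDeriv hP hQ hRx.ne (mul_ne_top ofReal_ne_top hSx.ne)]
  gcongr
  exact h _ toReal_nonneg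

theorem prod_right (h : HockeyStickDominates P Q P' Q') :
    HockeyStickDominates (P.prod R) (Q.prod S) (P'.prod R) (Q'.prod S) := fun α hα => by
  rw [hsDiv_prod_comm α R S P' Q', hsDiv_prod_comm α R S P Q]
  exact h.prod_left R S α hα

end HockeyStickDominates

/-- Composition preserves domination (two factors): if `(P₁, Q₁)` dominates `(P₁', Q₁')`
and `(P₂, Q₂)` dominates `(P₂', Q₂')` in hockey-stick divergence for all `α ≥ 0`, then
the product pair `(P₁ ⊗ P₂, Q₁ ⊗ Q₂)` dominates `(P₁' ⊗ P₂', Q₁' ⊗ Q₂')` for all `α ≥ 0`. -/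
theorem hsDiv_prod_le_of_domination
    {X₁ X₂ Y₁ Y₂ : Type*} [MeasurableSpace X₁] [MeasurableSpace X₂]
    [MeasurableSpace Y₁] [MeasurableSpace Y₂]
    (P₁' Q₁' : Measure X₁) [IsProbabilityMeasure P₁'] [IsProbabilityMeasure Q₁']
    (P₂' Q₂' : Measure X₂) [IsProbabilityMeasure P₂'] [IsProbabilityMeasure Q₂']
    (P₁ Q₁ : Measure Y₁) [IsProbabilityMeasure P₁] [IsProbabilityMeasure Q₁]
    (P₂ Q₂ : Measure Y₂) [IsProbabilityMeasure P₂] [IsProbabilityMeasure Q₂]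
    (h₁ : ∀ α : ℝ, 0 ≤ α → hsDiv α P₁' Q₁' ≤ hsDiv α P₁ Q₁)
    (h₂ : ∀ α : ℝ, 0 ≤ α → hsDiv α P₂' Q₂' ≤ hsDiv α P₂ Q₂) :
    ∀ α : ℝ, 0 ≤ α →
      hsDiv α (P₁'.prod P₂') (Q₁'.prod Q₂') ≤ hsDiv α (P₁.prod P₂) (Q₁.prod Q₂) := by
  intro α hα
  calc hsDiv α (P₁'.prod P₂') (Q₁'.prod Q₂')
      ≤ hsDiv α (P₁'.prod P₂) (Q₁'.prod Q₂) := HockeyStickDominates.prod_left P₁' Q₁' h₂ α hα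
    _ ≤ hsDiv α (P₁.prod P₂) (Q₁.prod Q₂) := HockeyStickDominates.prod_right P₂ Q₂ h₁ α hα
end

section
/- Dominating pair of datasets for the without-replacement subsampled Gaussian mechanism under the add relation: let σ > 0, let n, b be integers with 1 ≤ b ≤ n−1, and set γ := b/n. For every tuple D ∈ [−1,1]^{n−1} and every D' ∈ [−1,1]^n obtained from D by inserting one additional entry from [−1,1], and every α ≥ 0, H_α(M_{n−1,b}(D) ‖ M_{n,b}(D')) ≤ H_α(N(−b,σ²) ‖ (1−γ)·N(−b,σ²) + γ·N(2−b,σ²)). Moreover this bound is realized: for D = (−1,…,−1) of length n−1 and D' = (−1,…,−1,1) of length n, M_{n−1,b}(D) = N(−b,σ²) and M_{n,b}(D') = (1−γ)·N(−b,σ²) + γ·N(2−b,σ²). -/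
open MeasureTheory ProbabilityTheory
open scoped ENNReal NNReal

/-- The without-replacement subsampled Gaussian mechanism:
`M_{m,b}(x) = binom(m,b)⁻¹ ∑_{S ⊆ [m], |S| = b} N(∑_{i∈S} x_i, σ²)`. -/
noncomputable def worGauss (σ : ℝ) (b : ℕ) {m : ℕ} (x : Fin m → ℝ) : Measure ℝ :=
  ((m.choose b : ℝ≥0∞))⁻¹ •
    ∑ S ∈ Finset.powersetCard b (Finset.univ : Finset (Fin m)),
      gaussianReal (∑ i ∈ S, x i) ⟨σ ^ 2, sq_nonneg σ⟩


/-!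
Write `s_T = ∑_{j ∈ T} D_j` and `g t = N(t, σ²)(E)`. The `b`-subsets of the larger dataset are the
`b`-subsets `T` of the smaller one together with the sets `insert i U`, `|U| = b - 1`; double
counting the pairs `(T, j)` with `j ∈ T` (each `U = T \ {j}` arises `n - b` times) turns
`M(D)(E) - α M(D')(E)` into the average over these pairs of
`(1 - α (1 - γ)) g s_T - α γ g (s_T + D'_i - D_j)`. Each term compares two Gaussians whose means
differ by `|D'_i - D_j| ≤ 2`. That pair is the image of `(N(-b, σ²), N(2 - b, σ²))` under a Gaussian
Markov kernel, and by the layer-cake formula such a comparison cannot increase under a Markov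
kernel, so every term is bounded by the right-hand side.
-/

open Finset

section HockeyStick

variable {X : Type*} [MeasurableSpace X] {P Q : Measure X} {α : ℝ}

theorem hsDiv_le_of_forall {B : ℝ}
    (h : ∀ E, MeasurableSet E → (P E).toReal - α * (Q E).toReal ≤ B) : hsDiv α P Q ≤ B :=
  have : Nonempty {E : Set X // MeasurableSet E} := ⟨⟨∅, .empty⟩⟩
  ciSup_le fun E => h E.1 E.2

theorem le_hsDiv [IsFiniteMeasure P] (hα : 0 ≤ α) {E : Set X} (hE : MeasurableSet E) :
    (P E).toReal - α * (Q E).toReal ≤ hsDiv α P Q := by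
  refine le_ciSup (f := fun E : {E : Set X // MeasurableSet E} => (P E).toReal - α * (Q E).toReal)
    ⟨P.real Set.univ, ?_⟩ ⟨E, hE⟩
  rintro _ ⟨F, rfl⟩
  change P.real F - α * Q.real F ≤ P.real Set.univ
  have : 0 ≤ α * Q.real F := by positivity
  linarith [measureReal_mono (μ := P) (Set.subset_univ F.1)]

theorem le_hsDiv_mix [IsFiniteMeasure P] {R : Measure X} [IsFiniteMeasure R] (hα : 0 ≤ α)
    {γ : ℝ} (hγ0 : 0 ≤ γ) (hγ1 : γ ≤ 1) {F : Set X} (hF : MeasurableSet F) :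
    (1 - α * (1 - γ)) * P.real F - α * γ * R.real F
      ≤ hsDiv α P (ENNReal.ofReal (1 - γ) • P + ENNReal.ofReal γ • R) := by
  have h := le_hsDiv (P := P) (Q := ENNReal.ofReal (1 - γ) • P + ENNReal.ofReal γ • R) hα hF
  have hfin (a : ℝ) (μ : Measure X) [IsFiniteMeasure μ] : (ENNReal.ofReal a • μ) F ≠ ∞ :=
    ENNReal.mul_ne_top ENNReal.ofReal_ne_top (measure_ne_top _ _)
  rw [← measureReal_def, ← measureReal_def, measureReal_add_apply (hfin _ _) (hfin _ _),
    measureReal_ennreal_smul_apply, measureReal_ennreal_smul_apply,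
    ENNReal.toReal_ofReal (by linarith), ENNReal.toReal_ofReal hγ0] at h
  linarith

end HockeyStick

section DataProcessing

variable {X Y : Type*} [MeasurableSpace X] [MeasurableSpace Y] {P Q : Measure X}
  [IsFiniteMeasure P] [IsFiniteMeasure Q] {β δ S : ℝ}

theorem mul_integral_sub_mul_integral_le
    (hS : ∀ F, MeasurableSet F → β * P.real F - δ * Q.real F ≤ S)
    {f : X → ℝ} (hf : Measurable f) (hf01 : ∀ x, f x ∈ Set.Icc 0 1) :
    β * ∫ x, f x ∂P - δ * ∫ x, f x ∂Q ≤ S := by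
  have hlayer (μ : Measure X) [IsFiniteMeasure μ] :
      ∫ x, f x ∂μ = ∫ t in Set.Ioc 0 1, μ.real {x | t ≤ f x} := by
    refine Integrable.integral_eq_integral_Ioc_meas_le ?_ (ae_of_all _ fun x => (hf01 x).1)
      (ae_of_all _ fun x => (hf01 x).2)
    refine Integrable.of_bound hf.aestronglyMeasurable 1 (ae_of_all _ fun x => ?_)
    rw [Real.norm_of_nonneg (hf01 x).1]
    exact (hf01 x).2
  have hint (μ : Measure X) [IsFiniteMeasure μ] :
      IntegrableOn (fun t => μ.real {x | t ≤ f x}) (Set.Ioc 0 1) := by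
    have hanti : Antitone fun t => μ.real {x | t ≤ f x} := fun s t hst =>
      measureReal_mono fun x hx => le_trans hst hx
    exact (hanti.locallyIntegrable.integrableOn_isCompact isCompact_Icc).mono_set
      Set.Ioc_subset_Icc_self
  calc β * ∫ x, f x ∂P - δ * ∫ x, f x ∂Q
      = ∫ t in Set.Ioc 0 1, (β * P.real {x | t ≤ f x} - δ * Q.real {x | t ≤ f x}) := by
        rw [hlayer P, hlayer Q, integral_sub ((hint P).const_mul β) ((hint Q).const_mul δ),
          integral_const_mul, integral_const_mul]
    _ ≤ ∫ t in Set.Ioc 0 1, S :=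
        integral_mono (((hint P).const_mul β).sub ((hint Q).const_mul δ)) (integrable_const S)
          fun t => hS _ (measurableSet_le measurable_const hf)
    _ = S := by simp

theorem mul_bind_real_sub_le (hS : ∀ F, MeasurableSet F → β * P.real F - δ * Q.real F ≤ S)
    {κ : X → Measure Y} (hκ : Measurable κ) [∀ x, IsProbabilityMeasure (κ x)]
    {E : Set Y} (hE : MeasurableSet E) :
    β * (P.bind κ).real E - δ * (Q.bind κ).real E ≤ S := by
  have hκE : Measurable fun x => (κ x).real E :=
    ((Measure.measurable_coe hE).comp hκ).ennreal_toReal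
  have hbind (μ : Measure X) : (μ.bind κ).real E = ∫ x, (κ x).real E ∂μ := by
    rw [measureReal_def, Measure.bind_apply hE hκ.aemeasurable]
    exact (integral_toReal ((Measure.measurable_coe hE).comp hκ).aemeasurable
      (ae_of_all _ fun x => measure_lt_top _ _)).symm
  rw [hbind, hbind]
  exact mul_integral_sub_mul_integral_le hS hκE fun x => ⟨measureReal_nonneg, measureReal_le_one⟩

end DataProcessing

section Gaussian

theorem gaussianReal_bind_gaussianReal (μ : ℝ) (v₁ v₂ : ℝ≥0) :
    (gaussianReal μ v₁).bind (fun x => gaussianReal x v₂) = gaussianReal μ (v₁ + v₂) := by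
  have hκ : Measurable fun x => gaussianReal x v₂ :=
    measurable_gaussianReal.comp (measurable_id.prodMk measurable_const)
  refine Measure.ext_of_lintegral _ fun f hf => ?_
  calc ∫⁻ y, f y ∂(gaussianReal μ v₁).bind (fun x => gaussianReal x v₂)
      = ∫⁻ x, ∫⁻ z, f (x + z) ∂gaussianReal 0 v₂ ∂gaussianReal μ v₁ := by
        rw [Measure.lintegral_bind hκ.aemeasurable hf.aemeasurable]
        refine lintegral_congr fun x => ?_
        rw [← lintegral_map hf (measurable_const_add x), gaussianReal_map_const_add, zero_add]
    _ = ∫⁻ y, f y ∂gaussianReal μ (v₁ + v₂) := by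
        rw [← Measure.lintegral_conv hf, gaussianReal_conv_gaussianReal, add_zero]

theorem gaussianReal_bind_affine {μ l d : ℝ} {v₁ v₂ w : ℝ≥0}
    (hw : (w : ℝ) = l ^ 2 * v₁ + v₂) :
    (gaussianReal μ v₁).bind (fun x => gaussianReal (l * x + d) v₂)
      = gaussianReal (l * μ + d) w := by
  have hκ : Measurable fun x => gaussianReal x v₂ :=
    measurable_gaussianReal.comp (measurable_id.prodMk measurable_const)
  have haff : Measurable fun x : ℝ => l * x + d := (measurable_const_mul l).add_const d
  set u : ℝ≥0 := ⟨l ^ 2 * v₁, by positivity⟩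
  have hmap : (gaussianReal μ v₁).map (fun x => l * x + d) = gaussianReal (l * μ + d) u := by
    rw [show (fun x => l * x + d) = (· + d) ∘ (l * ·) from rfl,
      ← Measure.map_map (measurable_add_const d) (measurable_const_mul l),
      gaussianReal_map_const_mul, gaussianReal_map_add_const]
    congr 1
  obtain rfl : w = u + v₂ := NNReal.eq (by rw [hw, NNReal.coe_add]; rfl)
  have hκ' : Measurable fun x => gaussianReal (l * x + d) v₂ := hκ.comp haff
  ext E hE
  rw [Measure.bind_apply hE hκ'.aemeasurable, ← gaussianReal_bind_gaussianReal,
    Measure.bind_apply hE hκ.aemeasurable, ← hmap]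
  exact (lintegral_map ((Measure.measurable_coe hE).comp hκ) haff).symm

/-- The pair `(N(μ, v), N(μ + c, v))` is the image of `(N(μ₀, v), N(μ₀ + c₀, v))` under the
Markov kernel `x ↦ N(l x + d, (1 - l²) v)` with `l = c / c₀` and `d = μ - l μ₀`. -/
theorem gaussianReal_real_sub_le_of_abs_le {v : ℝ≥0} {μ₀ c₀ β δ S : ℝ}
    (hS : ∀ F, MeasurableSet F →
      β * (gaussianReal μ₀ v).real F - δ * (gaussianReal (μ₀ + c₀) v).real F ≤ S)
    {μ c : ℝ} (hc : |c| ≤ |c₀|) {E : Set ℝ} (hE : MeasurableSet E) :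
    β * (gaussianReal μ v).real E - δ * (gaussianReal (μ + c) v).real E ≤ S := by
  set l := c / c₀
  have hl : l * c₀ = c := by
    rcases eq_or_ne c₀ 0 with h | h
    · simp_all
    · exact div_mul_cancel₀ c h
  have hl2 : l ^ 2 ≤ 1 := by
    rw [div_pow]
    exact div_le_one_of_le₀ (sq_le_sq.mpr hc) (sq_nonneg c₀)
  set v₂ : ℝ≥0 := ⟨(1 - l ^ 2) * v, mul_nonneg (by linarith) v.2⟩
  have hv : (v : ℝ) = l ^ 2 * v + v₂ := by
    change (v : ℝ) = l ^ 2 * v + (1 - l ^ 2) * v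
    ring
  have hκ : Measurable fun x => gaussianReal (l * x + (μ - l * μ₀)) v₂ :=
    measurable_gaussianReal.comp
      (((measurable_const_mul l).add_const _).prodMk measurable_const)
  have h := mul_bind_real_sub_le hS hκ hE
  rwa [gaussianReal_bind_affine hv, gaussianReal_bind_affine hv, mul_add, hl,
    show l * μ₀ + (μ - l * μ₀) = μ by ring,
    show l * μ₀ + c + (μ - l * μ₀) = μ + c by ring] at h

end Gaussian

section Subsets

variable {α M : Type*} [AddCommMonoid M]

theorem Finset.sum_powersetCard_succ_insert [DecidableEq α] {x : α} {s : Finset α} (hx : x ∉ s)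
    (n : ℕ) (f : Finset α → M) :
    ∑ t ∈ powersetCard (n + 1) (insert x s), f t
      = ∑ t ∈ powersetCard (n + 1) s, f t + ∑ t ∈ powersetCard n s, f (insert x t) := by
  have hxt {t : Finset α} {k : ℕ} (ht : t ∈ powersetCard k s) : x ∉ t :=
    fun h => hx ((mem_powersetCard.mp ht).1 h)
  rw [powersetCard_succ_insert hx, sum_union, sum_image]
  · intro t ht u hu h
    rw [← erase_insert (hxt ht), h, erase_insert (hxt hu)]
  · refine disjoint_left.mpr fun t ht htu => ?_
    obtain ⟨u, -, rfl⟩ := mem_image.mp htu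
    exact hxt ht (mem_insert_self x u)

theorem Finset.sum_powersetCard_sum_const (s : Finset α) (n : ℕ) (f : Finset α → M) :
    ∑ t ∈ powersetCard n s, ∑ _j ∈ t, f t = n • ∑ t ∈ powersetCard n s, f t := by
  rw [smul_sum]
  exact sum_congr rfl fun t ht => by rw [Finset.sum_const, (mem_powersetCard.mp ht).2]

theorem Finset.sum_powersetCard_succ_sum_erase [DecidableEq α] (s : Finset α) (n : ℕ)
    (f : Finset α → M) :
    ∑ t ∈ powersetCard (n + 1) s, ∑ j ∈ t, f (t.erase j)
      = (s.card - n) • ∑ t ∈ powersetCard n s, f t := by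
  have hcard : ∀ t ∈ powersetCard n s, ∑ _j ∈ s \ t, f t = (s.card - n) • f t := by
    intro t ht
    rw [sum_const, card_sdiff_of_subset (mem_powersetCard.mp ht).1, (mem_powersetCard.mp ht).2]
  rw [smul_sum, ← sum_congr rfl hcard, sum_sigma', sum_sigma']
  refine sum_nbij' (fun p => ⟨p.1.erase p.2, p.2⟩) (fun p => ⟨insert p.2 p.1, p.2⟩)
    ?_ ?_ ?_ ?_ fun _ _ => rfl
  · rintro ⟨t, j⟩ hp
    simp only [mem_sigma, mem_powersetCard] at hp ⊢
    exact ⟨⟨(erase_subset j t).trans hp.1.1, by rw [card_erase_of_mem hp.2, hp.1.2]; rfl⟩,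
      mem_sdiff.mpr ⟨hp.1.1 hp.2, notMem_erase j t⟩⟩
  · rintro ⟨t, j⟩ hp
    simp only [mem_sigma, mem_powersetCard, mem_sdiff] at hp ⊢
    exact ⟨⟨insert_subset hp.2.1 hp.1.1, by rw [card_insert_of_notMem hp.2.2, hp.1.2]⟩,
      mem_insert_self j t⟩
  · rintro ⟨t, j⟩ hp
    simp only [mem_sigma] at hp
    simp only [insert_erase hp.2]
  · rintro ⟨t, j⟩ hp
    simp only [mem_sigma, mem_sdiff] at hp
    simp only [erase_insert hp.2.2]

end Subsets

theorem Fin.sum_powersetCard_succ_comp_sum {M : Type*} [AddCommMonoid M] {m : ℕ} (k : ℕ)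
    (i : Fin (m + 1)) (x : Fin (m + 1) → ℝ) (f : ℝ → M) :
    ∑ T ∈ powersetCard (k + 1) univ, f (∑ j ∈ T, x j)
      = ∑ T ∈ powersetCard (k + 1) univ, f (∑ j ∈ T, x (i.succAbove j))
        + ∑ T ∈ powersetCard k univ, f (x i + ∑ j ∈ T, x (i.succAbove j)) := by
  have hi : i ∉ univ.map i.succAboveEmb := by simp
  rw [Fin.univ_succAbove m i, cons_eq_insert, sum_powersetCard_succ_insert hi, powersetCard_map,
    powersetCard_map, sum_map, sum_map]
  congr 1 <;> refine sum_congr rfl fun T _ => congrArg f ?_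
  · exact sum_map T i.succAboveEmb x
  · rw [RelEmbedding.coe_toEmbedding, mapEmbedding_apply, sum_insert (by simp), sum_map]
    rfl

theorem Nat.choose_div_choose_succ_succ {m k : ℕ} (hk : k ≤ m) :
    (m.choose k : ℝ) / (m + 1).choose (k + 1) = (k + 1) / (m + 1) := by
  have h : ((m + 1) * m.choose k : ℝ) = (m + 1).choose (k + 1) * (k + 1) := by
    exact_mod_cast Nat.add_one_mul_choose_eq m k
  have hpos : (0 : ℝ) < (m + 1).choose (k + 1) := by exact_mod_cast Nat.choose_pos (by omega)
  rw [div_eq_div_iff hpos.ne' (by positivity)]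
  linarith

theorem Nat.cast_choose_mul_succ_eq {m k : ℕ} (hk : k ≤ m) :
    (m.choose (k + 1) * (m + 1) : ℝ) = (m + 1).choose (k + 1) * (m - k) := by
  rw [← Nat.cast_sub hk, ← Nat.add_sub_add_right m 1 k]
  exact_mod_cast Nat.choose_mul_succ_eq m (k + 1)

theorem Nat.choose_succ_div_choose_succ {m k : ℕ} (hk : k ≤ m) :
    (m.choose (k + 1) : ℝ) / (m + 1).choose (k + 1) = 1 - (k + 1) / (m + 1) := by
  have h := Nat.cast_choose_mul_succ_eq hk
  have hpos : (0 : ℝ) < (m + 1).choose (k + 1) := by exact_mod_cast Nat.choose_pos (by omega)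
  rw [div_eq_iff hpos.ne']
  field_simp
  linarith

section Mechanism

variable (σ : ℝ)

theorem worGauss_real_apply (b : ℕ) {m : ℕ} (x : Fin m → ℝ) (E : Set ℝ) :
    (worGauss σ b x).real E = (m.choose b : ℝ)⁻¹ *
      ∑ S ∈ powersetCard b univ, (gaussianReal (∑ i ∈ S, x i) ⟨σ ^ 2, sq_nonneg σ⟩).real E := by
  unfold worGauss
  -- the anonymous constructor in `worGauss` has type `{r // 0 ≤ r}`, on which `rw` gets stuck;
  -- naming it as an `ℝ≥0` removes the mismatch
  set v : ℝ≥0 := ⟨σ ^ 2, sq_nonneg σ⟩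
  rw [measureReal_ennreal_smul_apply, ENNReal.toReal_inv, ENNReal.toReal_natCast,
    measureReal_def, Measure.finsetSum_apply, ENNReal.toReal_sum fun _ _ => measure_ne_top _ _]
  rfl

theorem Fin.sum_powersetCard_comp_sum_const {M : Type*} [AddCommMonoid M] (b m : ℕ) (a : ℝ)
    (f : ℝ → M) :
    ∑ S ∈ powersetCard b (univ : Finset (Fin m)), f (∑ _i ∈ S, a) = m.choose b • f (b * a) := by
  rw [sum_congr rfl fun S hS => by
      rw [Finset.sum_const, mem_powersetCard_univ.mp hS, nsmul_eq_mul],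
    Finset.sum_const, card_powersetCard, card_univ, Fintype.card_fin]

theorem worGauss_const {b m : ℕ} (hbm : b ≤ m) (a : ℝ) :
    worGauss σ b (fun _ : Fin m => a) = gaussianReal (b * a) ⟨σ ^ 2, sq_nonneg σ⟩ := by
  unfold worGauss
  set v : ℝ≥0 := ⟨σ ^ 2, sq_nonneg σ⟩
  rw [Fin.sum_powersetCard_comp_sum_const b m a fun t => gaussianReal t v,
    ← Nat.cast_smul_eq_nsmul ℝ≥0∞, smul_smul,
    ENNReal.inv_mul_cancel (by exact_mod_cast (Nat.choose_pos hbm).ne') (ENNReal.natCast_ne_top _),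
    one_smul]

theorem worGauss_snoc {b m : ℕ} (hb : 0 < b) (hbm : b ≤ m + 1) (a c : ℝ) :
    worGauss σ b (Fin.snoc (fun _ : Fin m => a) c : Fin (m + 1) → ℝ)
      = ENNReal.ofReal (1 - b / (m + 1)) • gaussianReal (b * a) ⟨σ ^ 2, sq_nonneg σ⟩
        + ENNReal.ofReal (b / (m + 1)) • gaussianReal (c + (b - 1) * a) ⟨σ ^ 2, sq_nonneg σ⟩ := by
  obtain ⟨k, rfl⟩ := Nat.exists_eq_add_one_of_ne_zero hb.ne'
  have hpos : (0 : ℝ) < (m + 1).choose (k + 1) := by exact_mod_cast Nat.choose_pos hbm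
  have hcoeff (n : ℕ) : ((m + 1).choose (k + 1) : ℝ≥0∞)⁻¹ * n
      = ENNReal.ofReal (n / (m + 1).choose (k + 1)) := by
    rw [ENNReal.ofReal_div_of_pos hpos, ENNReal.ofReal_natCast, ENNReal.ofReal_natCast,
      ENNReal.div_eq_inv_mul]
  unfold worGauss
  set v : ℝ≥0 := ⟨σ ^ 2, sq_nonneg σ⟩
  rw [Fin.sum_powersetCard_succ_comp_sum k (Fin.last m) _ fun t => gaussianReal t v]
  simp only [Fin.snoc_last, Fin.succAbove_last, Fin.snoc_castSucc]
  rw [Fin.sum_powersetCard_comp_sum_const _ m a fun t => gaussianReal t v,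
    Fin.sum_powersetCard_comp_sum_const _ m a fun t => gaussianReal (c + t) v, smul_add,
    ← Nat.cast_smul_eq_nsmul ℝ≥0∞, ← Nat.cast_smul_eq_nsmul ℝ≥0∞, smul_smul, smul_smul, hcoeff,
    hcoeff, Nat.choose_succ_div_choose_succ (by omega), Nat.choose_div_choose_succ_succ (by omega)]
  push_cast
  rw [add_sub_cancel_right]

end Mechanism

theorem sum_powersetCard_succAbove_sub_eq (g : ℝ → ℝ) {m b : ℕ} (hb : 0 < b) (hbm : b ≤ m)
    (D' : Fin (m + 1) → ℝ) (i : Fin (m + 1)) (α : ℝ) :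
    (m.choose b : ℝ)⁻¹ * ∑ T ∈ powersetCard b univ, g (∑ l ∈ T, D' (i.succAbove l))
      - α * (((m + 1).choose b : ℝ)⁻¹ * ∑ T ∈ powersetCard b univ, g (∑ l ∈ T, D' l))
      = ((m.choose b : ℝ) * b)⁻¹ * ∑ T ∈ powersetCard b univ, ∑ j ∈ T,
          ((1 - α * (1 - b / (m + 1))) * g (∑ l ∈ T, D' (i.succAbove l))
            - α * (b / (m + 1))
              * g (∑ l ∈ T, D' (i.succAbove l) + (D' i - D' (i.succAbove j)))) := by
  obtain ⟨k, rfl⟩ := Nat.exists_eq_add_one_of_ne_zero hb.ne'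
  rw [Fin.sum_powersetCard_succ_comp_sum k i D' g]
  simp only [Finset.sum_sub_distrib, ← Finset.mul_sum]
  set D : Fin m → ℝ := fun j => D' (i.succAbove j)
  set A := ∑ T ∈ powersetCard (k + 1) univ, g (∑ j ∈ T, D j)
  set B := ∑ T ∈ powersetCard k univ, g (D' i + ∑ j ∈ T, D j)
  have hB : ∑ T ∈ powersetCard (k + 1) univ, ∑ j ∈ T, g (∑ l ∈ T, D l + (D' i - D j))
      = (m - k) * B := by
    have h := sum_powersetCard_succ_sum_erase (univ : Finset (Fin m)) k
      fun U => g (D' i + ∑ l ∈ U, D l)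
    rw [card_univ, Fintype.card_fin, nsmul_eq_mul, Nat.cast_sub (by omega)] at h
    rw [← h]
    refine sum_congr rfl fun T _ => sum_congr rfl fun j hj => ?_
    rw [sum_erase_eq_sub hj]
    congr 1
    ring
  rw [sum_powersetCard_sum_const, hB, nsmul_eq_mul]
  have hN : (0 : ℝ) < m.choose (k + 1) := by exact_mod_cast Nat.choose_pos hbm
  have hN' : (0 : ℝ) < (m + 1).choose (k + 1) := by exact_mod_cast Nat.choose_pos (by omega)
  have h := Nat.cast_choose_mul_succ_eq (m := m) (k := k) (by omega)
  push_cast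
  field_simp
  linear_combination (-α * (A + B)) * h

theorem hsDiv_worGauss_succAbove_le (σ : ℝ) {m b : ℕ} (hb : 0 < b) (hbm : b ≤ m)
    {D' : Fin (m + 1) → ℝ} {i : Fin (m + 1)} {c₀ : ℝ} (hc : ∀ j, |D' i - D' (i.succAbove j)| ≤ |c₀|)
    (μ₀ : ℝ) {α : ℝ} (hα : 0 ≤ α) :
    hsDiv α (worGauss σ b fun j => D' (i.succAbove j)) (worGauss σ b D') ≤
      hsDiv α (gaussianReal μ₀ ⟨σ ^ 2, sq_nonneg σ⟩)
        (ENNReal.ofReal (1 - b / (m + 1)) • gaussianReal μ₀ ⟨σ ^ 2, sq_nonneg σ⟩ +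
          ENNReal.ofReal (b / (m + 1)) • gaussianReal (μ₀ + c₀) ⟨σ ^ 2, sq_nonneg σ⟩) := by
  set γ : ℝ := b / (m + 1)
  have hγ1 : γ ≤ 1 := by
    rw [div_le_one (by positivity)]
    exact_mod_cast hbm.trans m.le_succ
  have hN : (0 : ℝ) < m.choose b * b := by
    have := Nat.choose_pos hbm
    positivity
  refine hsDiv_le_of_forall fun E hE => ?_
  rw [← measureReal_def, ← measureReal_def, worGauss_real_apply, worGauss_real_apply]
  set v : ℝ≥0 := ⟨σ ^ 2, sq_nonneg σ⟩
  rw [sum_powersetCard_succAbove_sub_eq (fun t => (gaussianReal t v).real E) hb hbm]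
  calc _ ≤ ((m.choose b : ℝ) * b)⁻¹ * ∑ T ∈ powersetCard b (univ : Finset (Fin m)), ∑ _j ∈ T,
        hsDiv α (gaussianReal μ₀ v) (ENNReal.ofReal (1 - γ) • gaussianReal μ₀ v
          + ENNReal.ofReal γ • gaussianReal (μ₀ + c₀) v) := by
        gcongr with T _ j
        exact gaussianReal_real_sub_le_of_abs_le
          (fun F hF => le_hsDiv_mix hα (by positivity) hγ1 hF) (hc j) hE
    _ = _ := by
        rw [sum_powersetCard_sum_const, Finset.sum_const, card_powersetCard, card_univ,
          Fintype.card_fin, smul_smul, nsmul_eq_mul, Nat.cast_mul, mul_comm (b : ℝ), ← mul_assoc,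
          inv_mul_cancel₀ hN.ne', one_mul]

theorem worGauss_dominating_pair_add_general (σ : ℝ) (m b : ℕ) (hb1 : 1 ≤ b) (hbm : b ≤ m)
    (γ : ℝ) (hγ : γ = (b : ℝ) / (m + 1)) :
    (∀ (D : Fin m → ℝ) (D' : Fin (m + 1) → ℝ),
      (∀ j, D j ∈ Set.Icc (-1 : ℝ) 1) → (∀ j, D' j ∈ Set.Icc (-1 : ℝ) 1) →
      (∃ i : Fin (m + 1), ∀ j : Fin m, D j = D' (i.succAbove j)) →
      ∀ α : ℝ, 0 ≤ α →
        hsDiv α (worGauss σ b D) (worGauss σ b D') ≤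
          hsDiv α (gaussianReal (-(b : ℝ)) ⟨σ ^ 2, sq_nonneg σ⟩)
            (ENNReal.ofReal (1 - γ) • gaussianReal (-(b : ℝ)) ⟨σ ^ 2, sq_nonneg σ⟩ +
              ENNReal.ofReal γ • gaussianReal (2 - (b : ℝ)) ⟨σ ^ 2, sq_nonneg σ⟩)) ∧
    worGauss σ b (fun _ : Fin m => (-1 : ℝ)) = gaussianReal (-(b : ℝ)) ⟨σ ^ 2, sq_nonneg σ⟩ ∧
    worGauss σ b (Fin.snoc (fun _ : Fin m => (-1 : ℝ)) 1) =
      ENNReal.ofReal (1 - γ) • gaussianReal (-(b : ℝ)) ⟨σ ^ 2, sq_nonneg σ⟩ +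
        ENNReal.ofReal γ • gaussianReal (2 - (b : ℝ)) ⟨σ ^ 2, sq_nonneg σ⟩ := by
  subst hγ
  refine ⟨fun D D' _ hD' ⟨i, hi⟩ α hα => ?_, by simpa using worGauss_const σ hbm (-1), ?_⟩
  · obtain rfl : D = fun j => D' (i.succAbove j) := funext hi
    have hc (j : Fin m) : |D' i - D' (i.succAbove j)| ≤ |(2 : ℝ)| := by
      obtain ⟨h₁, h₂⟩ := hD' i
      obtain ⟨h₃, h₄⟩ := hD' (i.succAbove j)
      rw [abs_two, abs_le]
      constructor <;> linarith
    simpa [neg_add_eq_sub] using hsDiv_worGauss_succAbove_le σ hb1 hbm hc (-(b : ℝ)) hα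
  · rw [worGauss_snoc σ hb1 (by omega) (-1) 1, mul_neg_one,
      show (1 : ℝ) + (b - 1) * -1 = 2 - b by ring]

/-- Dominating pair of datasets for the without-replacement subsampled Gaussian mechanism
under the add relation (with `n = m + 1`, `1 ≤ b ≤ m`, `γ = b/n`): for datasets with entries
in `[−1,1]` where `D' ∈ [−1,1]^n` is obtained from `D ∈ [−1,1]^{n−1}` by inserting one entry,
`H_α(M_{n−1,b}(D) ‖ M_{n,b}(D')) ≤ H_α(N(−b,σ²) ‖ (1−γ)N(−b,σ²) + γN(2−b,σ²))` for all
`α ≥ 0`, and the bound is realized by `D = (−1,…,−1)`, `D' = (−1,…,−1,1)`. -/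
theorem worGauss_dominating_pair_add (σ : ℝ) (hσ : 0 < σ) (m b : ℕ) (hb1 : 1 ≤ b) (hbm : b ≤ m)
    (γ : ℝ) (hγ : γ = (b : ℝ) / (m + 1)) :
    (∀ (D : Fin m → ℝ) (D' : Fin (m + 1) → ℝ),
      (∀ j, D j ∈ Set.Icc (-1 : ℝ) 1) → (∀ j, D' j ∈ Set.Icc (-1 : ℝ) 1) →
      (∃ i : Fin (m + 1), ∀ j : Fin m, D j = D' (i.succAbove j)) →
      ∀ α : ℝ, 0 ≤ α →
        hsDiv α (worGauss σ b D) (worGauss σ b D') ≤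
          hsDiv α (gaussianReal (-(b : ℝ)) ⟨σ ^ 2, sq_nonneg σ⟩)
            (ENNReal.ofReal (1 - γ) • gaussianReal (-(b : ℝ)) ⟨σ ^ 2, sq_nonneg σ⟩ +
              ENNReal.ofReal γ • gaussianReal (2 - (b : ℝ)) ⟨σ ^ 2, sq_nonneg σ⟩)) ∧
    worGauss σ b (fun _ : Fin m => (-1 : ℝ)) = gaussianReal (-(b : ℝ)) ⟨σ ^ 2, sq_nonneg σ⟩ ∧
    worGauss σ b (Fin.snoc (fun _ : Fin m => (-1 : ℝ)) 1) =
      ENNReal.ofReal (1 - γ) • gaussianReal (-(b : ℝ)) ⟨σ ^ 2, sq_nonneg σ⟩ +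
        ENNReal.ofReal γ • gaussianReal (2 - (b : ℝ)) ⟨σ ^ 2, sq_nonneg σ⟩ :=
  worGauss_dominating_pair_add_general σ m b hb1 hbm γ hγ
end

section
/- Extremality of the endpoints for subsampled Gaussian mixtures: let σ > 0, γ ∈ [0,1], and a, a' ∈ [−1,1]. Then for every α ≥ 0, H_α((1−γ)·N(0,σ²) + γ·N(a,σ²) ‖ (1−γ)·N(0,σ²) + γ·N(a',σ²)) ≤ H_α((1−γ)·N(0,σ²) + γ·N(1,σ²) ‖ (1−γ)·N(0,σ²) + γ·N(−1,σ²)). -/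
/-!
The likelihood ratio of `N(b, v)` to `N(0, v)` is `x ↦ exp ((2 b x - b²) / 2v)`, monotone in `x`
with the sign of `b`. By the Neyman–Pearson exchange argument, among sets of prescribed
`N(0, v)`-mass an upper ray `Ioi k` therefore has the largest `N(b, v)`-mass when `b ≥ 0` and the
smallest when `b ≤ 0`; the reflection `x ↦ -x` (which fixes `N(0, v)`) and the monotonicity of
`N(b, v)(Ioi k)` in `b` turn this into: for every set `E` there is a set `R` with the same
`N(0, v)`-mass such that `N(a, v)(E) ≤ N(1, v)(R)` and `N(-1, v)(R) ≤ N(a', v)(E)`. So each value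
`P(E) - α Q(E)` on the left is dominated by the value at `R` on the right.
-/

open MeasureTheory ProbabilityTheory
open scoped ENNReal NNReal

open Set Filter

theorem hsDiv_le_hsDiv_of_forall_exists {X Y : Type*} [MeasurableSpace X] [MeasurableSpace Y]
    {α : ℝ} (hα : 0 ≤ α) {P Q : Measure X} {P' Q' : Measure Y}
    [IsFiniteMeasure Q] [IsFiniteMeasure P']
    (h : ∀ E, MeasurableSet E → ∃ E', MeasurableSet E' ∧ P E ≤ P' E' ∧ Q' E' ≤ Q E) :
    hsDiv α P Q ≤ hsDiv α P' Q' := by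
  have : Nonempty {E : Set X // MeasurableSet E} := ⟨⟨∅, .empty⟩⟩
  have hbdd : BddAbove (range fun E' : {E' : Set Y // MeasurableSet E'} ↦
      (P' E').toReal - α * (Q' E').toReal) := by
    refine ⟨P'.real univ, ?_⟩
    rintro _ ⟨E', rfl⟩
    have : (P' E').toReal ≤ P'.real univ := measureReal_mono (subset_univ _)
    have : 0 ≤ α * (Q' E').toReal := by positivity
    dsimp only
    linarith
  refine ciSup_le fun ⟨E, hE⟩ ↦ ?_
  obtain ⟨E', hE', hP, hQ⟩ := h E hE
  refine le_trans ?_ (le_ciSup hbdd ⟨E', hE'⟩)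
  gcongr
  · exact measure_ne_top P' E'
  · exact measure_ne_top Q E

section NeymanPearson

variable {Ω : Type*} [MeasurableSpace Ω] {μ : Measure Ω} [IsFiniteMeasure μ] {f : Ω → ℝ≥0∞}
  {A B : Set Ω} {c : ℝ≥0∞}

theorem withDensity_apply_le_of_measure_eq (hf : Measurable f) (hA : MeasurableSet A)
    (hB : MeasurableSet B) (hAB : ∀ x ∈ A \ B, f x ≤ c) (hBA : ∀ x ∈ B \ A, c ≤ f x)
    (hmass : μ A = μ B) : μ.withDensity f A ≤ μ.withDensity f B := by
  have hdiff : μ (A \ B) = μ (B \ A) :=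
    measure_sdiff_symm hA.nullMeasurableSet hB.nullMeasurableSet hmass (measure_ne_top _ _)
  calc μ.withDensity f A = μ.withDensity f (A ∩ B) + μ.withDensity f (A \ B) :=
        (measure_inter_add_sdiff A hB).symm
    _ ≤ μ.withDensity f (A ∩ B) + c * μ (A \ B) := by
        gcongr
        rw [withDensity_apply _ (hA.diff hB), ← setLIntegral_const]
        exact setLIntegral_mono measurable_const hAB
    _ = μ.withDensity f (B ∩ A) + c * μ (B \ A) := by rw [inter_comm, hdiff]
    _ ≤ μ.withDensity f (B ∩ A) + μ.withDensity f (B \ A) := by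
        gcongr
        rw [withDensity_apply _ (hB.diff hA), ← setLIntegral_const]
        exact setLIntegral_mono hf hBA
    _ = μ.withDensity f B := measure_inter_add_sdiff B hA

end NeymanPearson

theorem continuous_cdf (μ : Measure ℝ) [IsProbabilityMeasure μ] [NullSingletonClass μ] :
    Continuous (cdf μ) := by
  refine continuous_iff_continuousAt.2 fun x ↦ ?_
  have hatom := (cdf μ).measure_singleton x
  rw [measure_cdf, measure_singleton, eq_comm, ENNReal.ofReal_eq_zero, sub_nonpos] at hatom
  rw [(monotone_cdf μ).continuousAt_iff_leftLim_eq_rightLim, (cdf μ).rightLim_eq]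
  exact le_antisymm ((monotone_cdf μ).leftLim_le le_rfl) hatom

theorem exists_measure_Iic_eq (μ : Measure ℝ) [IsProbabilityMeasure μ] [NullSingletonClass μ]
    {t : ℝ≥0∞} (ht₀ : 0 < t) (ht₁ : t < 1) : ∃ k, μ (Iic k) = t := by
  have ht : t ≠ ∞ := ht₁.ne_top
  obtain ⟨k, -, hk⟩ := isPreconnected_univ.intermediate_value_Ioo (l₁ := atBot) (l₂ := atTop)
    (by simp) (by simp) (continuous_cdf μ).continuousOn (tendsto_cdf_atBot μ)
    (tendsto_cdf_atTop μ) (show t.toReal ∈ Ioo 0 1 from ⟨ENNReal.toReal_pos ht₀.ne' ht,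
      ENNReal.toReal_lt_of_lt_ofReal (by simpa using ht₁)⟩)
  exact ⟨k, by rw [← ofReal_cdf, hk, ENNReal.ofReal_toReal ht]⟩

section Gaussian

variable {v : ℝ≥0}

theorem gaussianReal_eq_withDensity (hv : v ≠ 0) (b : ℝ) :
    gaussianReal b v = (gaussianReal 0 v).withDensity
      fun x ↦ ENNReal.ofReal (Real.exp ((2 * (b * x) - b ^ 2) / (2 * v))) := by
  rw [gaussianReal_of_var_ne_zero _ hv, gaussianReal_of_var_ne_zero _ hv,
    ← withDensity_mul _ (measurable_gaussianPDF _ _) (by fun_prop)]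
  congr 1
  funext x
  simp only [Pi.mul_apply, gaussianPDF, gaussianPDFReal]
  rw [← ENNReal.ofReal_mul (by positivity), mul_assoc _ (Real.exp _), ← Real.exp_add]
  congr 3
  ring

theorem gaussianReal_neg_apply (b : ℝ) {s : Set ℝ} (hs : MeasurableSet s) :
    gaussianReal (-b) v s = gaussianReal b v (-s) := by
  rw [← gaussianReal_map_neg, Measure.map_apply measurable_neg hs]
  rfl

theorem gaussianReal_Ioi_mono (k : ℝ) {a b : ℝ} (hab : a ≤ b) :
    gaussianReal a v (Ioi k) ≤ gaussianReal b v (Ioi k) := by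
  rw [← add_sub_cancel a b, ← gaussianReal_map_add_const,
    Measure.map_apply (measurable_add_const _) measurableSet_Ioi]
  exact measure_mono fun x hx ↦ by simp only [mem_preimage, mem_Ioi] at hx ⊢; linarith

theorem gaussianReal_le_gaussianReal_Ioi (hv : v ≠ 0) {b : ℝ} (hb : 0 ≤ b) {E : Set ℝ}
    (hE : MeasurableSet E) {k : ℝ} (hk : gaussianReal 0 v E = gaussianReal 0 v (Ioi k)) :
    gaussianReal b v E ≤ gaussianReal b v (Ioi k) := by
  rw [gaussianReal_eq_withDensity hv b]
  refine withDensity_apply_le_of_measure_eq (by fun_prop) hE measurableSet_Ioi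
    (c := ENNReal.ofReal (Real.exp ((2 * (b * k) - b ^ 2) / (2 * v)))) ?_ ?_ hk
  · rintro x ⟨-, hx⟩
    have : b * x ≤ b * k := mul_le_mul_of_nonneg_left (not_lt.1 hx) hb
    gcongr
  · rintro x ⟨hx, -⟩
    have : b * k ≤ b * x := mul_le_mul_of_nonneg_left (le_of_lt hx) hb
    gcongr

theorem gaussianReal_Ioi_le_gaussianReal (hv : v ≠ 0) {b : ℝ} (hb : b ≤ 0) {E : Set ℝ}
    (hE : MeasurableSet E) {k : ℝ} (hk : gaussianReal 0 v E = gaussianReal 0 v (Ioi k)) :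
    gaussianReal b v (Ioi k) ≤ gaussianReal b v E := by
  rw [gaussianReal_eq_withDensity hv b]
  refine withDensity_apply_le_of_measure_eq (by fun_prop) measurableSet_Ioi hE
    (c := ENNReal.ofReal (Real.exp ((2 * (b * k) - b ^ 2) / (2 * v)))) ?_ ?_ hk.symm
  · rintro x ⟨hx, -⟩
    have : b * x ≤ b * k := mul_le_mul_of_nonpos_left (le_of_lt hx) hb
    gcongr
  · rintro x ⟨-, hx⟩
    have : b * k ≤ b * x := mul_le_mul_of_nonpos_left (not_lt.1 hx) hb
    gcongr

theorem gaussianReal_le_gaussianReal_one_Ioi (hv : v ≠ 0) {a : ℝ} (ha : a ∈ Icc (-1 : ℝ) 1)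
    {E : Set ℝ} (hE : MeasurableSet E) {k : ℝ}
    (hk : gaussianReal 0 v E = gaussianReal 0 v (Ioi k)) :
    gaussianReal a v E ≤ gaussianReal 1 v (Ioi k) := by
  rcases le_total 0 a with h | h
  · exact (gaussianReal_le_gaussianReal_Ioi hv h hE hk).trans (gaussianReal_Ioi_mono k ha.2)
  · have hk' : gaussianReal 0 v (-E) = gaussianReal 0 v (Ioi k) := by
      rw [← gaussianReal_neg_apply 0 hE, neg_zero, hk]
    calc gaussianReal a v E = gaussianReal (-a) v (-E) := by
          rw [← gaussianReal_neg_apply _ hE, neg_neg]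
      _ ≤ gaussianReal (-a) v (Ioi k) :=
          gaussianReal_le_gaussianReal_Ioi hv (neg_nonneg.2 h) hE.neg hk'
      _ ≤ gaussianReal 1 v (Ioi k) := gaussianReal_Ioi_mono k (by linarith [ha.1])

theorem gaussianReal_neg_one_Ioi_le_gaussianReal (hv : v ≠ 0) {a : ℝ} (ha : a ∈ Icc (-1 : ℝ) 1)
    {E : Set ℝ} (hE : MeasurableSet E) {k : ℝ}
    (hk : gaussianReal 0 v E = gaussianReal 0 v (Ioi k)) :
    gaussianReal (-1) v (Ioi k) ≤ gaussianReal a v E := by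
  rcases le_total a 0 with h | h
  · exact (gaussianReal_Ioi_mono k ha.1).trans (gaussianReal_Ioi_le_gaussianReal hv h hE hk)
  · have hk' : gaussianReal 0 v (-E) = gaussianReal 0 v (Ioi k) := by
      rw [← gaussianReal_neg_apply 0 hE, neg_zero, hk]
    calc gaussianReal (-1) v (Ioi k) ≤ gaussianReal (-a) v (Ioi k) :=
          gaussianReal_Ioi_mono k (by linarith [ha.2])
      _ ≤ gaussianReal (-a) v (-E) :=
          gaussianReal_Ioi_le_gaussianReal hv (neg_nonpos.2 h) hE.neg hk'
      _ = gaussianReal a v E := by rw [← gaussianReal_neg_apply _ hE, neg_neg]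

theorem exists_gaussianReal_extremal (hv : v ≠ 0) {a a' : ℝ} (ha : a ∈ Icc (-1 : ℝ) 1)
    (ha' : a' ∈ Icc (-1 : ℝ) 1) {E : Set ℝ} (hE : MeasurableSet E) :
    ∃ R, MeasurableSet R ∧ gaussianReal 0 v E = gaussianReal 0 v R ∧
      gaussianReal a v E ≤ gaussianReal 1 v R ∧ gaussianReal (-1) v R ≤ gaussianReal a' v E := by
  have hac (b b' : ℝ) : gaussianReal b v ≪ gaussianReal b' v :=
    (gaussianReal_absolutelyContinuous b hv).trans (gaussianReal_absolutelyContinuous' b' hv)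
  by_cases hE₀ : gaussianReal 0 v E = 0
  · exact ⟨∅, .empty, by simpa using hE₀, by simpa using hac a 0 hE₀, by simp⟩
  by_cases hE₁ : gaussianReal 0 v Eᶜ = 0
  · refine ⟨univ, .univ, by simpa [prob_compl_eq_zero_iff hE] using hE₁,
      by simp [prob_le_one], ?_⟩
    simpa [prob_compl_eq_zero_iff hE] using hac a' 0 hE₁
  -- the rays `Ioi k` realise exactly the masses in `(0, 1)`
  have := nullSingletonClass_gaussianReal (μ := 0) hv
  obtain ⟨k, hk⟩ := exists_measure_Iic_eq (gaussianReal 0 v) (pos_iff_ne_zero.2 hE₁)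
    (prob_le_one.lt_of_ne (mt (prob_compl_eq_one_iff hE).1 hE₀))
  have hEk : gaussianReal 0 v E = gaussianReal 0 v (Ioi k) := by
    rw [← compl_Iic, prob_compl_eq_one_sub measurableSet_Iic, hk, prob_compl_eq_one_sub hE,
      ENNReal.sub_sub_cancel ENNReal.one_ne_top prob_le_one]
  exact ⟨Ioi k, measurableSet_Ioi, hEk, gaussianReal_le_gaussianReal_one_Ioi hv ha hE hEk,
    gaussianReal_neg_one_Ioi_le_gaussianReal hv ha' hE hEk⟩

end Gaussian

noncomputable def gaussMixture (γ : ℝ) (v : ℝ≥0) (b : ℝ) : Measure ℝ :=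
  ENNReal.ofReal (1 - γ) • gaussianReal 0 v + ENNReal.ofReal γ • gaussianReal b v

instance (γ : ℝ) (v : ℝ≥0) (b : ℝ) : IsFiniteMeasure (gaussMixture γ v b) := by
  have := (gaussianReal 0 v).smul_finite (ENNReal.ofReal_ne_top (r := 1 - γ))
  have := (gaussianReal b v).smul_finite (ENNReal.ofReal_ne_top (r := γ))
  unfold gaussMixture
  infer_instance

theorem gaussMixture_apply_le {γ : ℝ} {v : ℝ≥0} {b b' : ℝ} {E E' : Set ℝ}
    (h₀ : gaussianReal 0 v E = gaussianReal 0 v E')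
    (h : gaussianReal b v E ≤ gaussianReal b' v E') :
    gaussMixture γ v b E ≤ gaussMixture γ v b' E' := by
  simp only [gaussMixture, Measure.add_apply, Measure.smul_apply, smul_eq_mul, h₀]
  gcongr

theorem hsDiv_gaussMixture_extremal_general (σ γ : ℝ) (hσ : 0 < σ)
    (a a' : ℝ) (ha : a ∈ Set.Icc (-1 : ℝ) 1) (ha' : a' ∈ Set.Icc (-1 : ℝ) 1)
    (α : ℝ) (hα : 0 ≤ α) :
    hsDiv α
      (ENNReal.ofReal (1 - γ) • gaussianReal 0 ⟨σ ^ 2, sq_nonneg σ⟩ +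
        ENNReal.ofReal γ • gaussianReal a ⟨σ ^ 2, sq_nonneg σ⟩)
      (ENNReal.ofReal (1 - γ) • gaussianReal 0 ⟨σ ^ 2, sq_nonneg σ⟩ +
        ENNReal.ofReal γ • gaussianReal a' ⟨σ ^ 2, sq_nonneg σ⟩) ≤
    hsDiv α
      (ENNReal.ofReal (1 - γ) • gaussianReal 0 ⟨σ ^ 2, sq_nonneg σ⟩ +
        ENNReal.ofReal γ • gaussianReal 1 ⟨σ ^ 2, sq_nonneg σ⟩)
      (ENNReal.ofReal (1 - γ) • gaussianReal 0 ⟨σ ^ 2, sq_nonneg σ⟩ +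
        ENNReal.ofReal γ • gaussianReal (-1) ⟨σ ^ 2, sq_nonneg σ⟩) := by
  set v : ℝ≥0 := ⟨σ ^ 2, sq_nonneg σ⟩
  have hv : v ≠ 0 := fun h ↦ (pow_pos hσ 2).ne' (congrArg NNReal.toReal h)
  change hsDiv α (gaussMixture γ v a) (gaussMixture γ v a') ≤
    hsDiv α (gaussMixture γ v 1) (gaussMixture γ v (-1))
  refine hsDiv_le_hsDiv_of_forall_exists hα fun E hE ↦ ?_
  obtain ⟨R, hR, h₀, hP, hQ⟩ := exists_gaussianReal_extremal hv ha ha' hE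
  exact ⟨R, hR, gaussMixture_apply_le h₀ hP, gaussMixture_apply_le h₀.symm hQ⟩

/-- Extremality of the endpoints for subsampled Gaussian mixtures: for `a, a' ∈ [−1,1]`
and all `α ≥ 0`,
`H_α((1−γ)N(0,σ²) + γN(a,σ²) ‖ (1−γ)N(0,σ²) + γN(a',σ²))
  ≤ H_α((1−γ)N(0,σ²) + γN(1,σ²) ‖ (1−γ)N(0,σ²) + γN(−1,σ²))`. -/
theorem hsDiv_gaussMixture_extremal (σ γ : ℝ) (hσ : 0 < σ) (hγ0 : 0 ≤ γ) (hγ1 : γ ≤ 1)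
    (a a' : ℝ) (ha : a ∈ Set.Icc (-1 : ℝ) 1) (ha' : a' ∈ Set.Icc (-1 : ℝ) 1)
    (α : ℝ) (hα : 0 ≤ α) :
    hsDiv α
      (ENNReal.ofReal (1 - γ) • gaussianReal 0 ⟨σ ^ 2, sq_nonneg σ⟩ +
        ENNReal.ofReal γ • gaussianReal a ⟨σ ^ 2, sq_nonneg σ⟩)
      (ENNReal.ofReal (1 - γ) • gaussianReal 0 ⟨σ ^ 2, sq_nonneg σ⟩ +
        ENNReal.ofReal γ • gaussianReal a' ⟨σ ^ 2, sq_nonneg σ⟩) ≤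
    hsDiv α
      (ENNReal.ofReal (1 - γ) • gaussianReal 0 ⟨σ ^ 2, sq_nonneg σ⟩ +
        ENNReal.ofReal γ • gaussianReal 1 ⟨σ ^ 2, sq_nonneg σ⟩)
      (ENNReal.ofReal (1 - γ) • gaussianReal 0 ⟨σ ^ 2, sq_nonneg σ⟩ +
        ENNReal.ofReal γ • gaussianReal (-1) ⟨σ ^ 2, sq_nonneg σ⟩) :=
  hsDiv_gaussMixture_extremal_general σ γ hσ a a' ha ha' α hα
end
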